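/- Let L ∈ ℝ^{n×m} have full column rank and c_0 ∈ (0,∞)^n, and suppose y* = Lᵀ c* for some positive vector c*. Then the strictly convex function f(α) = Σ_i c_{0,i} exp((Lα)_i) − ⟨y*, α⟩ attains a minimizer α* satisfying Lᵀ(c_0 ∘ exp(Lα*)) = y*; consequently c(α*) = c_0 ∘ exp(Lα*) is a positive vector with the prescribed conserved totals y* and the same reaction quotients as c_0 (given Sᵀ L = 0). -/

import Mathlib

/-!
Since `y* = Lᵀ c*`, the objective is `f(α) = F(Lα)` with `F(v) = Σᵢ c₀ᵢ exp vᵢ - c*ᵢ vᵢ`. Each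
summand is at least `c*ᵢ |vᵢ|` minus a constant, so `F` is coercive on `ℝⁿ` and attains its
minimum on the closed subspace `range L`. At a minimizer `α*` all directional derivatives of `f`
vanish, which is `Lᵀ (c₀ ∘ exp (Lα*)) = y*`; and `ln c(α*) = ln c₀ + Lα*`, whose second term is
annihilated by `Sᵀ`.
-/

open Matrix Filter Real Set

lemma mul_abs_sub_le_mul_exp_sub_mul {a b : ℝ} (ha : 0 < a) (hb : 0 < b) (t : ℝ) :
    b * |t| - 2 * b ^ 2 / a ≤ a * exp t - b * t := by
  have hC : 0 ≤ 2 * b ^ 2 / a := by positivity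
  rcases le_or_gt t 0 with ht | ht
  · rw [abs_of_nonpos ht]
    nlinarith [exp_pos t]
  · rw [abs_of_pos ht]
    have hsq : 0 ≤ a / 2 * (t - 2 * b / a) ^ 2 := by positivity
    have hexp := quadratic_le_exp_of_nonneg ht.le
    have hsquare : a / 2 * (t - 2 * b / a) ^ 2 = a * t ^ 2 / 2 - 2 * b * t + 2 * b ^ 2 / a := by
      field_simp; ring
    nlinarith

lemma Finite.exists_pos_le_of_forall_pos {ι : Type*} [Finite ι] {b : ι → ℝ}
    (hb : ∀ i, 0 < b i) : ∃ ε > 0, ∀ i, ε ≤ b i := by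
  cases isEmpty_or_nonempty ι
  · exact ⟨1, one_pos, isEmptyElim⟩
  · obtain ⟨j, hj⟩ := Finite.exists_min b
    exact ⟨b j, hb j, hj⟩

lemma exists_isMinOn_comp_linearMap {E F : Type*} [AddCommGroup E] [Module ℝ E]
    [NormedAddCommGroup F] [NormedSpace ℝ F] [FiniteDimensional ℝ F] {g : F → ℝ}
    (hg : Continuous g) (hcoer : Tendsto g (cocompact F) atTop) (A : E →ₗ[ℝ] F) :
    ∃ x, IsMinOn (g ∘ A) univ x := by
  obtain ⟨_, ⟨x, rfl⟩, hmin⟩ := hg.continuousOn.exists_isMinOn'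
    (Submodule.closed_of_finiteDimensional (LinearMap.range A)) (LinearMap.range A).zero_mem
    ((hcoer.eventually_ge_atTop (g 0)).filter_mono inf_le_left)
  exact ⟨x, fun y _ => hmin ⟨y, rfl⟩⟩

section ExpPotential

variable {ι : Type*} [Fintype ι]

noncomputable def expPotential (c₀ c v : ι → ℝ) : ℝ := ∑ i, (c₀ i * exp (v i) - c i * v i)

variable {c₀ c : ι → ℝ}

lemma continuous_expPotential : Continuous (expPotential c₀ c) := by
  unfold expPotential
  fun_prop

lemma tendsto_expPotential_cocompact (hc₀ : ∀ i, 0 < c₀ i) (hc : ∀ i, 0 < c i) :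
    Tendsto (expPotential c₀ c) (cocompact (ι → ℝ)) atTop := by
  obtain ⟨ε, hε, hεc⟩ := Finite.exists_pos_le_of_forall_pos hc
  have hnorm (v : ι → ℝ) : ‖v‖ ≤ ∑ i, |v i| :=
    (pi_norm_le_iff_of_nonneg (by positivity)).2 fun i => (Real.norm_eq_abs _).trans_le
      (Finset.single_le_sum (fun j _ => abs_nonneg (v j)) (Finset.mem_univ i))
  set C := ∑ i, 2 * c i ^ 2 / c₀ i
  have hbound (v : ι → ℝ) : ε * ‖v‖ - C ≤ expPotential c₀ c v :=
    calc ε * ‖v‖ - C ≤ ∑ i, c i * |v i| - C := by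
          grw [hnorm v, Finset.mul_sum]
          gcongr with i
          exact hεc i
      _ = ∑ i, (c i * |v i| - 2 * c i ^ 2 / c₀ i) := by rw [Finset.sum_sub_distrib]
      _ ≤ expPotential c₀ c v := Finset.sum_le_sum fun i _ =>
          mul_abs_sub_le_mul_exp_sub_mul (hc₀ i) (hc i) (v i)
  exact tendsto_atTop_mono hbound <|
    tendsto_atTop_add_const_right _ _ (tendsto_norm_cocompact_atTop.const_mul_atTop hε)

end ExpPotential

section MassAction

variable {ι κ : Type*} [Fintype ι] [Fintype κ] {L : Matrix ι κ ℝ} {c₀ : ι → ℝ}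

lemma hasDerivAt_sum_mul_exp_add_mul (c v w : ι → ℝ) :
    HasDerivAt (fun t => ∑ i, c i * exp (v i + t * w i)) (∑ i, c i * exp (v i) * w i) 0 := by
  have hterm (i : ι) :=
    ((((hasDerivAt_id (0 : ℝ)).mul_const (w i)).const_add (v i)).exp).const_mul (c i)
  exact (HasDerivAt.fun_sum (u := Finset.univ) fun i _ => hterm i).congr_deriv (by simp [mul_assoc])

lemma expPotential_mulVec {c : ι → ℝ} {y : κ → ℝ} (hy : Lᵀ *ᵥ c = y) (α : κ → ℝ) :
    expPotential c₀ c (L *ᵥ α) = ∑ i, c₀ i * exp ((L *ᵥ α) i) - y ⬝ᵥ α := by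
  rw [expPotential, Finset.sum_sub_distrib, ← hy, mulVec_transpose, ← dotProduct_mulVec]
  rfl

lemma transpose_mulVec_mul_exp_eq_of_isMinOn {y α : κ → ℝ}
    (hα : IsMinOn (fun α => ∑ i, c₀ i * exp ((L *ᵥ α) i) - y ⬝ᵥ α) univ α) :
    Lᵀ *ᵥ (fun i => c₀ i * exp ((L *ᵥ α) i)) = y := by
  refine dotProduct_eq _ _ fun d => ?_
  set φ := fun t : ℝ => ∑ i, c₀ i * exp ((L *ᵥ α) i + t * (L *ᵥ d) i) - (y ⬝ᵥ α + t * y ⬝ᵥ d)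
  have hφ (t : ℝ) : φ t = ∑ i, c₀ i * exp ((L *ᵥ (α + t • d)) i) - y ⬝ᵥ (α + t • d) := by
    simp [φ, mulVec_add, mulVec_smul, dotProduct_add, dotProduct_smul]
  have hderiv : HasDerivAt φ (∑ i, c₀ i * exp ((L *ᵥ α) i) * (L *ᵥ d) i - y ⬝ᵥ d) 0 :=
    ((hasDerivAt_sum_mul_exp_add_mul c₀ (L *ᵥ α) (L *ᵥ d)).sub
      (((hasDerivAt_id (0 : ℝ)).mul_const (y ⬝ᵥ d)).const_add (y ⬝ᵥ α))).congr_deriv (by simp)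
  have hmin : IsMinOn φ univ 0 := isMinOn_univ_iff.2 fun t => by
    simpa only [hφ, zero_smul, add_zero] using isMinOn_univ_iff.1 hα (α + t • d)
  rw [mulVec_transpose, ← dotProduct_mulVec]
  simpa [sub_eq_zero, dotProduct] using (hmin.isLocalMin univ_mem).hasDerivAt_eq_zero hderiv

lemma mulVec_log_mul_exp_mulVec {ρ : Type*} {A : Matrix ρ ι ℝ} (hAL : A * L = 0)
    (hc₀ : ∀ i, 0 < c₀ i) (α : κ → ℝ) :
    A *ᵥ (fun i => log (c₀ i * exp ((L *ᵥ α) i))) = A *ᵥ (fun i => log (c₀ i)) := by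
  have hlog : (fun i => log (c₀ i * exp ((L *ᵥ α) i))) = (fun i => log (c₀ i)) + L *ᵥ α := by
    funext i
    rw [log_mul (hc₀ i).ne' (exp_pos _).ne', log_exp]
    rfl
  rw [hlog, mulVec_add, mulVec_mulVec, hAL, zero_mulVec, add_zero]

end MassAction

theorem stmt_17_general (n r m : ℕ) (S : Matrix (Fin n) (Fin r) ℝ)
    (L : Matrix (Fin n) (Fin m) ℝ) (hSL : Sᵀ * L = 0)
    (c₀ : Fin n → ℝ) (hc₀ : ∀ i, 0 < c₀ i)
    (ystar : Fin m → ℝ) (cstar : Fin n → ℝ) (hcstar : ∀ i, 0 < cstar i)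
    (hy : Lᵀ.mulVec cstar = ystar) :
    ∃ αstar : Fin m → ℝ,
      IsMinOn (fun α : Fin m → ℝ => ∑ i, c₀ i * Real.exp (L.mulVec α i) - ∑ j, ystar j * α j)
        Set.univ αstar ∧
      Lᵀ.mulVec (fun i => c₀ i * Real.exp (L.mulVec αstar i)) = ystar ∧
      (∀ i, 0 < c₀ i * Real.exp (L.mulVec αstar i)) ∧
      Sᵀ.mulVec (fun i => Real.log (c₀ i * Real.exp (L.mulVec αstar i))) =
        Sᵀ.mulVec (fun i => Real.log (c₀ i)) := by
  have hcoercive := tendsto_expPotential_cocompact hc₀ hcstar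
  obtain ⟨αstar, hmin⟩ :=
    exists_isMinOn_comp_linearMap continuous_expPotential hcoercive L.mulVecLin
  have hobjective : expPotential c₀ cstar ∘ L.mulVecLin =
      fun α => ∑ i, c₀ i * exp ((L *ᵥ α) i) - ystar ⬝ᵥ α :=
    funext (expPotential_mulVec hy)
  rw [hobjective] at hmin
  exact ⟨αstar, hmin, transpose_mulVec_mul_exp_eq_of_isMinOn hmin,
    fun i => mul_pos (hc₀ i) (exp_pos _), mulVec_log_mul_exp_mulVec hSL hc₀ αstar⟩

/-- If `L` has full column rank, `c₀ > 0`, and `y* = Lᵀ c*` for some positive `c*`,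
then `f(α) = Σᵢ c₀ᵢ exp((Lα)ᵢ) − ⟨y*, α⟩` attains a minimizer `α*` with
`Lᵀ(c₀ ∘ exp(Lα*)) = y*`; the vector `c(α*) = c₀ ∘ exp(Lα*)` is positive,
has conserved totals `y*`, and (given `Sᵀ L = 0`) the same reaction quotients
as `c₀`. -/
theorem stmt_17 (n r m : ℕ) (S : Matrix (Fin n) (Fin r) ℝ)
    (L : Matrix (Fin n) (Fin m) ℝ) (hSL : Sᵀ * L = 0)
    (hL : Function.Injective L.mulVec)
    (c₀ : Fin n → ℝ) (hc₀ : ∀ i, 0 < c₀ i)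
    (ystar : Fin m → ℝ) (cstar : Fin n → ℝ) (hcstar : ∀ i, 0 < cstar i)
    (hy : Lᵀ.mulVec cstar = ystar) :
    ∃ αstar : Fin m → ℝ,
      IsMinOn (fun α : Fin m → ℝ => ∑ i, c₀ i * Real.exp (L.mulVec α i) - ∑ j, ystar j * α j)
        Set.univ αstar ∧
      Lᵀ.mulVec (fun i => c₀ i * Real.exp (L.mulVec αstar i)) = ystar ∧
      (∀ i, 0 < c₀ i * Real.exp (L.mulVec αstar i)) ∧
      Sᵀ.mulVec (fun i => Real.log (c₀ i * Real.exp (L.mulVec αstar i))) =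
        Sᵀ.mulVec (fun i => Real.log (c₀ i)) :=
  stmt_17_general n r m S L hSL c₀ hc₀ ystar cstar hcstar hy
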